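/- Let A be an abelian category with additive functions rk, deg as above (rk strictly positive on nonzero objects), and fix μ ∈ ℚ. Every semistable object of slope μ has finite length in the abelian category of semistable objects of slope μ, and the simple objects of this category are exactly the stable objects of slope μ (those nonzero V with μ(V) = μ such that every nonzero proper subobject F satisfies μ(F) < μ). -/

import Mathlib

open CategoryTheory CategoryTheory.Limits

/-- The objSlope of an object: degree divided by rank, as a rational number. -/
def objSlope {C : Type*} [Category C] (rk deg : C → ℤ) (X : C) : ℚ :=
  (deg X : ℚ) / (rk X : ℚ)

/-- A nonzero object `V` is semistable of objSlope `μ` if `μ(V) = μ` and every nonzero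
proper subobject `F ⊆ V` satisfies `μ(F) ≤ μ`. -/
def Semistable {C : Type*} [Category C] [Abelian C] (rk deg : C → ℤ) (μ : ℚ) (V : C) : Prop :=
  ¬ IsZero V ∧ objSlope rk deg V = μ ∧
    ∀ (F : C) (f : F ⟶ V), Mono f → ¬ IsZero F → ¬ IsIso f → objSlope rk deg F ≤ μ

/-- A nonzero object `V` is stable of objSlope `μ` if `μ(V) = μ` and every nonzero
proper subobject `F ⊆ V` satisfies `μ(F) < μ`. -/
def Stable {C : Type*} [Category C] [Abelian C] (rk deg : C → ℤ) (μ : ℚ) (V : C) : Prop :=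
  ¬ IsZero V ∧ objSlope rk deg V = μ ∧
    ∀ (F : C) (f : F ⟶ V), Mono f → ¬ IsZero F → ¬ IsIso f → objSlope rk deg F < μ

/-!
Slopes satisfy the seesaw property in a short exact sequence `0 → A → B → Q → 0` of nonzero
objects with `μ(B) = μ`: `μ(A) ≤ μ ↔ μ ≤ μ(Q)` and `μ(A) = μ ↔ μ(Q) = μ`. Hence subobjects and
quotients of slope `μ` of a semistable object are semistable, and a semistable object is stable
exactly when it has no proper nonzero semistable subobject. If `V` is semistable but not stable,
a proper semistable subobject `F` of maximal rank has stable quotient `V / F`, since the preimage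
of a proper semistable subobject of `V / F` would be a larger one; induction on the rank of `F`
gives the filtration.
-/
lemma div_le_iff_le_div_of_add_div_add_eq {K : Type*} [Field K] [LinearOrder K]
    [IsStrictOrderedRing K] {a b c d μ : K} (hb : 0 < b) (hd : 0 < d)
    (h : (a + c) / (b + d) = μ) : a / b ≤ μ ↔ μ ≤ c / d := by
  rw [div_eq_iff (by positivity)] at h
  rw [div_le_iff₀ hb, le_div_iff₀ hd]
  constructor <;> intro <;> nlinarith

lemma div_eq_iff_div_eq_of_add_div_add_eq {K : Type*} [Field K] [LinearOrder K]
    [IsStrictOrderedRing K] {a b c d μ : K} (hb : 0 < b) (hd : 0 < d)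
    (h : (a + c) / (b + d) = μ) : a / b = μ ↔ c / d = μ := by
  rw [div_eq_iff (by positivity)] at h
  rw [div_eq_iff hb.ne', div_eq_iff hd.ne']
  constructor <;> intro <;> nlinarith

section

variable {C : Type*} [Category C] [Abelian C]

lemma isIso_of_isIso_comp_of_mono {G F V : C} (g : G ⟶ F) (f : F ⟶ V) [Mono f]
    [IsIso (g ≫ f)] : IsIso g := by
  have : Epi f := epi_of_epi g f
  have : IsIso f := isIso_of_mono_of_epi f
  exact IsIso.of_isIso_comp_right g f

lemma not_isZero_cokernel_of_not_isIso {F V : C} (f : F ⟶ V) [Mono f] (hf : ¬ IsIso f) :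
    ¬ IsZero (cokernel f) := fun h =>
  have : Epi f := Preadditive.epi_of_isZero_cokernel f h
  hf (isIso_of_mono_of_epi f)

lemma not_isIso_kernel_ι {V W : C} (p : V ⟶ W) [Epi p] (hW : ¬ IsZero W) :
    ¬ IsIso (kernel.ι p) := fun _ => by
  have hp : p = 0 := by rw [← cancel_epi (kernel.ι p), kernel.condition, comp_zero]
  exact hW (IsZero.of_epi_eq_zero p hp)

lemma shortExact_cokernel {F V : C} (f : F ⟶ V) [Mono f] :
    (ShortComplex.mk f (cokernel.π f) (cokernel.condition f)).ShortExact where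
  exact := ShortComplex.exact_of_g_is_cokernel _ (cokernelIsCokernel f)

lemma shortExact_kernel {V W : C} (p : V ⟶ W) [Epi p] :
    (ShortComplex.mk (kernel.ι p) p (kernel.condition p)).ShortExact where
  exact := ShortComplex.exact_of_f_is_kernel _ (kernelIsKernel p)

def IsAdditiveOnShortExact (r : C → ℤ) : Prop :=
  ∀ S : ShortComplex C, S.ShortExact → r S.X₂ = r S.X₁ + r S.X₃

namespace IsAdditiveOnShortExact

variable {r : C → ℤ} (hr : IsAdditiveOnShortExact r)
include hr

lemma eq_zero_of_isZero {Z : C} (hZ : IsZero Z) : r Z = 0 := by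
  have := hr (ShortComplex.mk (𝟙 Z) (𝟙 Z) (hZ.eq_of_src _ _))
    { exact := ShortComplex.exact_of_isZero_X₂ _ hZ }
  dsimp at this
  omega

lemma eq_add_cokernel {F V : C} (f : F ⟶ V) [Mono f] : r V = r F + r (cokernel f) :=
  hr _ (shortExact_cokernel f)

lemma eq_kernel_add {V W : C} (p : V ⟶ W) [Epi p] : r V = r (kernel p) + r W :=
  hr _ (shortExact_kernel p)

lemma eq_of_iso {X Y : C} (e : X ≅ Y) : r X = r Y := by
  rw [hr.eq_add_cokernel e.hom,
    hr.eq_zero_of_isZero ((isZero_zero C).of_iso (cokernel.ofEpi e.hom)), add_zero]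

end IsAdditiveOnShortExact

section Slope

variable {rk deg : C → ℤ} {μ : ℚ}

lemma rk_le_of_mono (hrk : IsAdditiveOnShortExact rk) (hrkpos : ∀ X : C, ¬ IsZero X → 0 < rk X)
    {F V : C} (f : F ⟶ V) [Mono f] : rk F ≤ rk V := by
  have hQ : 0 ≤ rk (cokernel f) := by
    by_cases h : IsZero (cokernel f)
    · exact (hrk.eq_zero_of_isZero h).ge
    · exact (hrkpos _ h).le
  linarith [hrk.eq_add_cokernel f]

lemma rk_lt_of_mono_of_not_isIso (hrk : IsAdditiveOnShortExact rk)
    (hrkpos : ∀ X : C, ¬ IsZero X → 0 < rk X) {F V : C} (f : F ⟶ V) [Mono f]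
    (hf : ¬ IsIso f) : rk F < rk V := by
  linarith [hrk.eq_add_cokernel f, hrkpos _ (not_isZero_cokernel_of_not_isIso f hf)]

lemma objSlope_eq_of_iso (hrk : IsAdditiveOnShortExact rk) (hdeg : IsAdditiveOnShortExact deg)
    {X Y : C} (e : X ≅ Y) : objSlope rk deg X = objSlope rk deg Y := by
  rw [objSlope, objSlope, hrk.eq_of_iso e, hdeg.eq_of_iso e]

lemma objSlope_shortExact (hrk : IsAdditiveOnShortExact rk) (hdeg : IsAdditiveOnShortExact deg)
    {S : ShortComplex C} (hS : S.ShortExact) :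
    objSlope rk deg S.X₂ = (deg S.X₁ + deg S.X₃ : ℚ) / (rk S.X₁ + rk S.X₃ : ℚ) := by
  rw [objSlope, hrk S hS, hdeg S hS]
  push_cast
  rfl

section Seesaw

variable (hrk : IsAdditiveOnShortExact rk) (hdeg : IsAdditiveOnShortExact deg)
  (hrkpos : ∀ X : C, ¬ IsZero X → 0 < rk X) {S : ShortComplex C} (hS : S.ShortExact)
  (h₁ : ¬ IsZero S.X₁) (h₃ : ¬ IsZero S.X₃) (h₂ : objSlope rk deg S.X₂ = μ)
include hrk hdeg hrkpos hS h₁ h₃ h₂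

lemma objSlope_le_iff_le_objSlope_of_shortExact :
    objSlope rk deg S.X₁ ≤ μ ↔ μ ≤ objSlope rk deg S.X₃ :=
  div_le_iff_le_div_of_add_div_add_eq (by exact_mod_cast hrkpos _ h₁)
    (by exact_mod_cast hrkpos _ h₃) ((objSlope_shortExact hrk hdeg hS).symm.trans h₂)

lemma objSlope_eq_iff_objSlope_eq_of_shortExact :
    objSlope rk deg S.X₁ = μ ↔ objSlope rk deg S.X₃ = μ :=
  div_eq_iff_div_eq_of_add_div_add_eq (by exact_mod_cast hrkpos _ h₁)
    (by exact_mod_cast hrkpos _ h₃) ((objSlope_shortExact hrk hdeg hS).symm.trans h₂)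

end Seesaw

end Slope

section Semistability

variable {rk deg : C → ℤ} {μ : ℚ}

lemma Semistable.of_mono {F V : C} (hV : Semistable rk deg μ V) (f : F ⟶ V) [Mono f]
    (hF : ¬ IsZero F) (hFμ : objSlope rk deg F = μ) : Semistable rk deg μ F :=
  ⟨hF, hFμ, fun G g _ hG hg =>
    hV.2.2 G (g ≫ f) inferInstance hG fun _ => hg (isIso_of_isIso_comp_of_mono g f)⟩

lemma Semistable.forall_isZero_iff_stable {V : C} (hV : Semistable rk deg μ V) :
    (∀ (F : C) (f : F ⟶ V), Mono f → Semistable rk deg μ F → ¬ IsIso f → IsZero F) ↔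
      Stable rk deg μ V := by
  refine ⟨fun h => ⟨hV.1, hV.2.1, fun F f _ hF hf => ?_⟩,
    fun hst F f _ hF hf => (hF.2.1.not_lt (hst.2.2 F f inferInstance hF.1 hf)).elim⟩
  refine (hV.2.2 F f inferInstance hF hf).lt_of_ne fun hFμ => hF ?_
  exact h F f inferInstance (hV.of_mono f hF hFμ) hf

lemma Stable.of_iso (hrk : IsAdditiveOnShortExact rk) (hdeg : IsAdditiveOnShortExact deg)
    {X Y : C} (hX : Stable rk deg μ X) (e : X ≅ Y) : Stable rk deg μ Y :=
  ⟨fun h => hX.1 (h.of_iso e), (objSlope_eq_of_iso hrk hdeg e).symm.trans hX.2.1,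
    fun F f _ hF hf => hX.2.2 F (f ≫ e.inv) inferInstance hF fun _ => hf (by
      rw [← Category.comp_id f, ← e.inv_hom_id, ← Category.assoc]; infer_instance)⟩

lemma Stable.cokernel_comp_isIso (hrk : IsAdditiveOnShortExact rk)
    (hdeg : IsAdditiveOnShortExact deg) {A' A B B' : C} (a : A' ⟶ A) [IsIso a] {f : A ⟶ B}
    (b : B ⟶ B') [IsIso b] (hf : Stable rk deg μ (cokernel f)) :
    Stable rk deg μ (cokernel (a ≫ f ≫ b)) :=
  hf.of_iso hrk hdeg (cokernelEpiComp a (f ≫ b) ≪≫ cokernelCompIsIso f b).symm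

variable (hrk : IsAdditiveOnShortExact rk) (hdeg : IsAdditiveOnShortExact deg)
  (hrkpos : ∀ X : C, ¬ IsZero X → 0 < rk X)
include hrk hdeg hrkpos

lemma Semistable.le_objSlope_of_epi {V W : C} (hV : Semistable rk deg μ V) (p : V ⟶ W) [Epi p]
    (hW : ¬ IsZero W) : μ ≤ objSlope rk deg W := by
  by_cases hK : IsZero (kernel p)
  · have : Mono p := Preadditive.mono_of_isZero_kernel p hK
    have : IsIso p := isIso_of_mono_of_epi p
    exact ((objSlope_eq_of_iso hrk hdeg (asIso p)).symm.trans hV.2.1).ge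
  · exact (objSlope_le_iff_le_objSlope_of_shortExact hrk hdeg hrkpos (shortExact_kernel p)
      hK hW hV.2.1).1 (hV.2.2 _ (kernel.ι p) inferInstance hK (not_isIso_kernel_ι p hW))

lemma Semistable.of_epi {V Q : C} (hV : Semistable rk deg μ V) (q : V ⟶ Q) [Epi q]
    (hQ : ¬ IsZero Q) (hQμ : objSlope rk deg Q = μ) : Semistable rk deg μ Q :=
  ⟨hQ, hQμ, fun _ g _ hG hg =>
    have hW := not_isZero_cokernel_of_not_isIso g hg
    (objSlope_le_iff_le_objSlope_of_shortExact hrk hdeg hrkpos (shortExact_cokernel g) hG hW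
      hQμ).2 (hV.le_objSlope_of_epi hrk hdeg hrkpos (q ≫ cokernel.π g) hW)⟩

lemma Semistable.stable_cokernel_of_maximal {F V : C} (hV : Semistable rk deg μ V)
    (f : F ⟶ V) [Mono f] (hF : Semistable rk deg μ F) (hf : ¬ IsIso f)
    (hmax : ∀ (G : C) (g : G ⟶ V), Mono g → Semistable rk deg μ G → ¬ IsIso g → rk G ≤ rk F) :
    Stable rk deg μ (cokernel f) := by
  have hQ := not_isZero_cokernel_of_not_isIso f hf
  have hQμ : objSlope rk deg (cokernel f) = μ :=
    (objSlope_eq_iff_objSlope_eq_of_shortExact hrk hdeg hrkpos (shortExact_cokernel f) hF.1 hQ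
      hV.2.1).1 hF.2.1
  refine (hV.of_epi hrk hdeg hrkpos (cokernel.π f) hQ hQμ).forall_isZero_iff_stable.1
    fun G g _ hG hg => (?_ : False).elim
  set p := cokernel.π f ≫ cokernel.π g
  have hW := not_isZero_cokernel_of_not_isIso g hg
  have hK_rk : rk (kernel p) = rk F + rk G := by
    linarith [hrk.eq_kernel_add p, hrk.eq_add_cokernel f, hrk.eq_add_cokernel g]
  have hK : ¬ IsZero (kernel p) := fun h => by
    linarith [hrk.eq_zero_of_isZero h, hrkpos F hF.1, hrkpos G hG.1]
  have hWμ : objSlope rk deg (cokernel g) = μ :=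
    (objSlope_eq_iff_objSlope_eq_of_shortExact hrk hdeg hrkpos (shortExact_cokernel g) hG.1 hW
      hQμ).1 hG.2.1
  have hKμ : objSlope rk deg (kernel p) = μ :=
    (objSlope_eq_iff_objSlope_eq_of_shortExact hrk hdeg hrkpos (shortExact_kernel p) hK hW
      hV.2.1).2 hWμ
  have := hmax _ (kernel.ι p) inferInstance (hV.of_mono (kernel.ι p) hK hKμ)
    (not_isIso_kernel_ι p hW)
  linarith [hrkpos G hG.1]

lemma Semistable.exists_mono_stable_cokernel {V : C} (hV : Semistable rk deg μ V)
    (hst : ¬ Stable rk deg μ V) :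
    ∃ (F : C) (f : F ⟶ V), Mono f ∧ Semistable rk deg μ F ∧ rk F < rk V ∧
      Stable rk deg μ (cokernel f) := by
  obtain ⟨F₀, f₀, hf₀, hF₀, hf₀', -⟩ : ∃ (F : C) (f : F ⟶ V), Mono f ∧ Semistable rk deg μ F ∧
      ¬ IsIso f ∧ ¬ IsZero F := by
    simpa using mt hV.forall_isZero_iff_stable.1 hst
  obtain ⟨r, ⟨F, f, hf, hF, hf', rfl⟩, hmax⟩ := Int.exists_greatest_of_bdd
    (P := fun r => ∃ (F : C) (f : F ⟶ V), Mono f ∧ Semistable rk deg μ F ∧ ¬ IsIso f ∧ rk F = r)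
    ⟨rk V, fun _ ⟨_, f, _, _, _, hr⟩ => hr ▸ rk_le_of_mono hrk hrkpos f⟩
    ⟨_, F₀, f₀, hf₀, hF₀, hf₀', rfl⟩
  exact ⟨F, f, hf, hF, rk_lt_of_mono_of_not_isIso hrk hrkpos f hf',
    hV.stable_cokernel_of_maximal hrk hdeg hrkpos f hF hf'
      fun G g hg hG hg' => hmax _ ⟨G, g, hg, hG, hg', rfl⟩⟩

end Semistability

def HasStableFiltration (rk deg : C → ℤ) (μ : ℚ) (V : C) : Prop :=
  ∃ (n : ℕ) (X : Fin (n + 1) → C) (f : ∀ i : Fin n, X i.castSucc ⟶ X i.succ),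
    IsZero (X 0) ∧ Nonempty (X (Fin.last n) ≅ V) ∧
    ∀ i : Fin n, Mono (f i) ∧ Semistable rk deg μ (X i.succ) ∧ Stable rk deg μ (cokernel (f i))

namespace HasStableFiltration

variable {rk deg : C → ℤ} {μ : ℚ}

lemma of_isZero {Z : C} (hZ : IsZero Z) : HasStableFiltration rk deg μ Z :=
  ⟨0, fun _ => Z, fun i => i.elim0, hZ, ⟨Iso.refl Z⟩, fun i => i.elim0⟩

lemma extend (hrk : IsAdditiveOnShortExact rk) (hdeg : IsAdditiveOnShortExact deg) {F V : C}
    (hF : HasStableFiltration rk deg μ F) (f : F ⟶ V) [Mono f] (hV : Semistable rk deg μ V)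
    (hf : Stable rk deg μ (cokernel f)) : HasStableFiltration rk deg μ V := by
  obtain ⟨m, X, g, hX₀, ⟨e⟩, hg⟩ := hF
  set Y : Fin (m + 2) → C := Fin.snoc X V
  have hY : ∀ j : Fin (m + 1), Y j.castSucc = X j := fun j => Fin.snoc_castSucc ..
  have hY_succ : ∀ j : Fin m, Y j.castSucc.succ = X j.succ := fun j => by
    rw [Fin.succ_castSucc]; exact hY j.succ
  have hY_last : Y (Fin.last m).succ = V := by rw [Fin.succ_last]; exact Fin.snoc_last ..
  refine ⟨m + 1, Y, fun i => Fin.lastCases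
      (motive := fun i : Fin (m + 1) => Y i.castSucc ⟶ Y i.succ)
      ((eqToHom (hY (Fin.last m)) ≫ e.hom) ≫ f ≫ eqToHom hY_last.symm)
      (fun j => eqToHom (hY j.castSucc) ≫ g j ≫ eqToHom (hY_succ j).symm) i,
    by rw [← Fin.castSucc_zero, hY]; exact hX₀, ⟨eqToIso (Fin.snoc_last ..)⟩, fun i => ?_⟩
  induction i using Fin.lastCases with
  | last =>
    simp only [Fin.lastCases_last]
    exact ⟨inferInstance, hY_last ▸ hV, hf.cokernel_comp_isIso hrk hdeg _ _⟩
  | cast j =>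
    simp only [Fin.lastCases_castSucc]
    have := (hg j).1
    exact ⟨inferInstance, (hY_succ j) ▸ (hg j).2.1, (hg j).2.2.cokernel_comp_isIso hrk hdeg _ _⟩

end HasStableFiltration

theorem Semistable.hasStableFiltration {rk deg : C → ℤ} {μ : ℚ}
    (hrk : IsAdditiveOnShortExact rk) (hdeg : IsAdditiveOnShortExact deg)
    (hrkpos : ∀ X : C, ¬ IsZero X → 0 < rk X) {V : C} (hV : Semistable rk deg μ V) :
    HasStableFiltration rk deg μ V := by
  by_cases hst : Stable rk deg μ V
  · exact (HasStableFiltration.of_isZero (isZero_zero C)).extend hrk hdeg 0 hV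
      (hst.of_iso hrk hdeg cokernelZeroIsoTarget.symm)
  · obtain ⟨F, f, _, hF, hlt, hf⟩ := hV.exists_mono_stable_cokernel hrk hdeg hrkpos hst
    have := hrkpos F hF.1
    exact (hF.hasStableFiltration hrk hdeg hrkpos).extend hrk hdeg f hV hf
termination_by (rk V).toNat
decreasing_by omega

end

theorem stmt2 {C : Type*} [Category C] [Abelian C] (rk deg : C → ℤ)
    (hrk : ∀ S : ShortComplex C, S.ShortExact → rk S.X₂ = rk S.X₁ + rk S.X₃)
    (hdeg : ∀ S : ShortComplex C, S.ShortExact → deg S.X₂ = deg S.X₁ + deg S.X₃)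
    (hrkpos : ∀ X : C, ¬ IsZero X → 0 < rk X) (μ : ℚ) :
    -- every semistable object of objSlope μ has finite length in the category of
    -- semistable objects of objSlope μ: it has a finite filtration with stable quotients
    (∀ V : C, Semistable rk deg μ V →
      ∃ (n : ℕ) (X : Fin (n + 1) → C) (f : ∀ i : Fin n, X i.castSucc ⟶ X i.succ),
        IsZero (X 0) ∧ Nonempty (X (Fin.last n) ≅ V) ∧
        ∀ i : Fin n, Mono (f i) ∧ Semistable rk deg μ (X i.succ) ∧
          Stable rk deg μ (cokernel (f i))) ∧
    -- the simple objects of this category are exactly the stable objects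
    (∀ V : C, Semistable rk deg μ V →
      ((∀ (F : C) (f : F ⟶ V), Mono f → Semistable rk deg μ F → ¬ IsIso f → IsZero F)
        ↔ Stable rk deg μ V)) :=
  ⟨fun _ hV => hV.hasStableFiltration hrk hdeg hrkpos, fun _ hV => hV.forall_isZero_iff_stable⟩
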